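/- arXiv:1012.3249 — 3 statements merged into one kernel-verified Lean document; each statement's English description precedes it below -/
import Mathlib

section
/- Let n, a, t, m be natural numbers with a ≥ 1 and 2an = a(a+1) + 2t + 2m. Let α₁ ≥ α₂ ≥ ... ≥ α_{n-a} ≥ 1 be positive integers with α₁ + ... + α_{n-a} = n and α₂ + 2α₃ + ... + (n-a-1)α_{n-a} = n(n-1)/2 - t. Then α₁ ≥ a - m + 1. -/
/-!
Write `β j = α (j + 1)` and `k = n - a`. Since every `β j ≥ 1`, for `j ≥ 1` we have
`j + β j ≤ j * β j + 1`; summing gives `∑ β j + ∑ j ≤ ∑ j * β j + (k - 1) + β 0`, i.e.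
`n + k(k-1)/2 ≤ n(n-1)/2 - t + (k - 1) + α₁`. With `n = k + a`, the relation
`2an = a(a+1) + 2t + 2m` turns this into exactly `α₁ ≥ a - m + 1`.
-/

open Finset

lemma sum_Icc_one_eq_sum_range {M : Type*} [AddCommMonoid M] (f : ℕ → M) (k : ℕ) :
    ∑ i ∈ Icc 1 k, f i = ∑ j ∈ range k, f (j + 1) := by
  rw [← Ico_add_one_right_eq_Icc, sum_Ico_eq_sum_range]
  simp only [add_comm 1, Nat.add_sub_cancel]

lemma Nat.add_le_mul_add_one {x y : ℕ} (hx : 1 ≤ x) (hy : 1 ≤ y) : x + y ≤ x * y + 1 := by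
  nlinarith [Nat.mul_le_mul (Nat.sub_le_sub_right hx 1) (Nat.sub_le_sub_right hy 1)]

lemma sum_range_add_sum_range_id_le {β : ℕ → ℕ} {k : ℕ} (hβ : ∀ j ≤ k, 1 ≤ β j) :
    ∑ j ∈ range (k + 1), β j + ∑ j ∈ range (k + 1), j
      ≤ ∑ j ∈ range (k + 1), j * β j + k + β 0 := by
  induction k with
  | zero => simp
  | succ k ih =>
    have hstep := Nat.add_le_mul_add_one (by omega : 1 ≤ k + 1) (hβ (k + 1) le_rfl)
    have := ih fun j hj => hβ j (by omega)
    rw [sum_range_succ _ (k + 1), sum_range_succ _ (k + 1), sum_range_succ _ (k + 1)]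
    omega

theorem stmt3_general (n a t m : ℕ) (α : ℕ → ℕ) (ha : 1 ≤ a)
    (hnam : 2 * a * n = a * (a + 1) + 2 * t + 2 * m)
    (hpos : ∀ i, 1 ≤ i → i ≤ n - a → 1 ≤ α i)
    (hsum : ∑ i ∈ Finset.Icc 1 (n - a), α i = n)
    (hM : (∑ i ∈ Finset.Icc 1 (n - a), (i - 1) * α i) + t = n * (n - 1) / 2) :
    α 1 + m ≥ a + 1 := by
  cases hk : n - a with
  | zero =>
    have hn : n = 0 := by simpa [hk] using hsum.symm
    subst hn
    nlinarith
  | succ k =>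
    rw [hk, sum_Icc_one_eq_sum_range] at hsum hM
    simp only [Nat.add_sub_cancel] at hM
    have hkey := sum_range_add_sum_range_id_le (β := fun j => α (j + 1)) (k := k)
      fun j hj => hpos (j + 1) (by omega) (by omega)
    rw [hsum] at hkey
    have hgauss := sum_range_id_mul_two (k + 1)
    have hM2 : (∑ j ∈ range (k + 1), j * α (j + 1) + t) * 2 = n * (n - 1) := by
      rw [hM, Nat.div_mul_cancel (Nat.even_mul_pred_self n).two_dvd]
    obtain rfl : n = k + 1 + a := by omega
    simp only [Nat.add_sub_cancel, show k + 1 + a - 1 = k + a by omega] at hgauss hM2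
    nlinarith

/-- Lower bound of Lemma 2.2: `α₁ ≥ a - m + 1`, stated without
natural subtraction as `α₁ + m ≥ a + 1`. -/
theorem stmt3 (n a t m : ℕ) (α : ℕ → ℕ) (ha : 1 ≤ a)
    (hnam : 2 * a * n = a * (a + 1) + 2 * t + 2 * m)
    (hmono : ∀ i j, 1 ≤ i → i ≤ j → j ≤ n - a → α j ≤ α i)
    (hpos : ∀ i, 1 ≤ i → i ≤ n - a → 1 ≤ α i)
    (hsum : ∑ i ∈ Finset.Icc 1 (n - a), α i = n)
    (hM : (∑ i ∈ Finset.Icc 1 (n - a), (i - 1) * α i) + t = n * (n - 1) / 2) :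
    α 1 + m ≥ a + 1 :=
  stmt3_general n a t m α ha hnam hpos hsum hM
end

section
/- Let α₁ ≥ α₂ ≥ ... ≥ α_k ≥ 1 be positive integers with Σαᵢ = n, k ≥ 1, and α₂ + 2α₃ + ... + (k-1)α_k = n(n-1)/2 - 1 (with the convention that the sum is 0 if k = 1). Then k = 1 and n = 2, i.e., the partition is (2). -/
/-!
Write `βᵢ = α₁ + ⋯ + αᵢ₋₁`. Expanding the square of `n = Σ αᵢ` gives
`n² = Σ αᵢ² + 2 Σ αᵢ βᵢ`, and `βᵢ ≥ i - 1` because every part is positive, so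
`n(n-1) - 2 Σ (i-1) αᵢ = Σ αᵢ(αᵢ - 1) + 2 Σ αᵢ (βᵢ - (i-1))`.
The hypothesis says this defect is exactly `2`. For the partition `(1ⁿ)` it is `0`; otherwise
the largest part satisfies `α₁ ≥ 2`, so the first sum is at least `2`, and if `k ≥ 2` the term
`α₂(β₂ - 1) = α₂(α₁ - 1)` of the second sum is positive, making the defect at least `4`.
Hence `k = 1`, and `n(n-1) = 2` forces `n = 2`.
-/

open Finset

theorem sq_sum_Icc_eq {R : Type*} [CommSemiring R] (f : ℕ → R) (k : ℕ) :
    (∑ i ∈ Icc 1 k, f i) ^ 2 =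
      ∑ i ∈ Icc 1 k, f i ^ 2 + 2 * ∑ i ∈ Icc 1 k, f i * ∑ j ∈ Ico 1 i, f j := by
  induction k with
  | zero => simp
  | succ k ih =>
    have hIco : Ico 1 (k + 1) = Icc 1 k := rfl
    simp only [sum_Icc_succ_top (Nat.le_add_left 1 k), hIco, add_sq, ih]
    ring

section Partition

variable {α : ℕ → ℕ} {k : ℕ}

theorem sub_one_le_sum_Ico {i : ℕ} (hpos : ∀ j ∈ Ico 1 i, 1 ≤ α j) :
    i - 1 ≤ ∑ j ∈ Ico 1 i, α j := by
  simpa using card_nsmul_le_sum (Ico 1 i) α 1 hpos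

theorem two_mul_sum_sub_one_mul_add_sum_eq_sq (hone : ∀ i ∈ Icc 1 k, α i = 1) :
    2 * ∑ i ∈ Icc 1 k, (i - 1) * α i + ∑ i ∈ Icc 1 k, α i = (∑ i ∈ Icc 1 k, α i) ^ 2 := by
  have hsq : ∑ i ∈ Icc 1 k, α i ^ 2 = ∑ i ∈ Icc 1 k, α i :=
    sum_congr rfl fun i hi => by rw [hone i hi, one_pow]
  have hprefix : ∑ i ∈ Icc 1 k, α i * ∑ j ∈ Ico 1 i, α j = ∑ i ∈ Icc 1 k, (i - 1) * α i := by
    refine sum_congr rfl fun i hi => ?_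
    have hsum : ∑ j ∈ Ico 1 i, α j = i - 1 := by
      rw [sum_congr rfl fun j hj => hone j ?_]
      · simp
      · simp only [mem_Icc, mem_Ico] at hi hj ⊢
        omega
    rw [hsum, hone i hi, one_mul, mul_one]
  rw [sq_sum_Icc_eq, hsq, hprefix]
  ring

theorem two_mul_sum_sub_one_mul_add_sum_add_four_le_sq (hpos : ∀ i ∈ Icc 1 k, 1 ≤ α i)
    (hk : 2 ≤ k) (hα₁ : 2 ≤ α 1) :
    2 * ∑ i ∈ Icc 1 k, (i - 1) * α i + ∑ i ∈ Icc 1 k, α i + 4 ≤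
      (∑ i ∈ Icc 1 k, α i) ^ 2 := by
  have h1 : 1 ∈ Icc 1 k := by simp only [mem_Icc]; omega
  have h2 : 2 ∈ Icc 1 k := by simp only [mem_Icc]; omega
  have hsq : ∑ i ∈ Icc 1 k, α i + 2 ≤ ∑ i ∈ Icc 1 k, α i ^ 2 := by
    rw [← add_sum_erase _ _ h1, ← add_sum_erase _ (fun i => α i ^ 2) h1]
    have hfirst : α 1 + 2 ≤ α 1 ^ 2 := by nlinarith
    have hrest : ∑ i ∈ (Icc 1 k).erase 1, α i ≤ ∑ i ∈ (Icc 1 k).erase 1, α i ^ 2 :=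
      sum_le_sum fun i _ => Nat.le_self_pow two_ne_zero (α i)
    omega
  have hprefix : ∑ i ∈ Icc 1 k, (i - 1) * α i < ∑ i ∈ Icc 1 k, α i * ∑ j ∈ Ico 1 i, α j := by
    refine sum_lt_sum (fun i hi => ?_) ⟨2, h2, ?_⟩
    · rw [mul_comm]
      refine Nat.mul_le_mul_left _ (sub_one_le_sum_Ico fun j hj => hpos j ?_)
      simp only [mem_Icc, mem_Ico] at hi hj ⊢
      omega
    have hα₂ := hpos 2 h2
    simp only [Nat.add_one_sub_one, one_mul, Nat.Ico_succ_singleton, sum_singleton]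
    nlinarith
  rw [sq_sum_Icc_eq]
  omega

end Partition

theorem two_mul_div_two_add_self (n : ℕ) : n * (n - 1) / 2 * 2 + n = n ^ 2 := by
  rw [Nat.div_mul_cancel (Nat.even_mul_pred_self n).two_dvd]
  cases n
  · rfl
  · rw [Nat.add_one_sub_one]
    ring

/-- Abelian case of Theorem 1.1(ii): if
`α₂ + 2α₃ + ... + (k-1)α_k = n(n-1)/2 - 1`, then `k = 1` and `n = 2`,
i.e. the partition is `(2)` and `G ≅ Z_{p²}`. -/
theorem stmt13 (n k : ℕ) (α : ℕ → ℕ) (hk : 1 ≤ k)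
    (hmono : ∀ i j, 1 ≤ i → i ≤ j → j ≤ k → α j ≤ α i)
    (hpos : ∀ i, 1 ≤ i → i ≤ k → 1 ≤ α i)
    (hsum : ∑ i ∈ Finset.Icc 1 k, α i = n)
    (hM : (∑ i ∈ Finset.Icc 1 k, (i - 1) * α i) + 1 = n * (n - 1) / 2) :
    k = 1 ∧ n = 2 := by
  have hpos' : ∀ i ∈ Icc 1 k, 1 ≤ α i := fun i hi => hpos i (mem_Icc.1 hi).1 (mem_Icc.1 hi).2
  have hdefect : 2 * ∑ i ∈ Icc 1 k, (i - 1) * α i + n + 2 = n ^ 2 := by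
    rw [← two_mul_div_two_add_self n, ← hM]
    ring
  subst hsum
  obtain rfl | hk2 : k = 1 ∨ 2 ≤ k := by omega
  · refine ⟨rfl, ?_⟩
    simp only [Icc_self, sum_singleton, Nat.sub_self, zero_mul, mul_zero, zero_add] at hdefect ⊢
    exact le_antisymm (by nlinarith) (by nlinarith)
  exfalso
  obtain hα₁ | hα₁ : α 1 = 1 ∨ 2 ≤ α 1 := by
    have := hpos' 1 (by simp only [mem_Icc]; omega)
    omega
  · have hone : ∀ i ∈ Icc 1 k, α i = 1 := fun i hi => by
      have := hmono 1 i le_rfl (mem_Icc.1 hi).1 (mem_Icc.1 hi).2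
      have := hpos' i hi
      omega
    have := two_mul_sum_sub_one_mul_add_sum_eq_sq hone
    omega
  · have := two_mul_sum_sub_one_mul_add_sum_add_four_le_sq hpos' hk2 hα₁
    omega
end

section
/- Let α₁ ≥ α₂ ≥ ... ≥ α_k ≥ 1 be positive integers with Σαᵢ = n and α₂ + 2α₃ + ... + (k-1)α_k = n(n-1)/2 - 3. Then either (k = 1 and n = 3) or (k = 3 and (α₁,α₂,α₃) = (2,1,1)), i.e., the partition is (3) or (2,1,1). -/
/-!
Write `α i = β i + 1` and `e = ∑ β i = n - k`. Since `∑ (i - 1) = k(k - 1)/2`, the hypothesis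
becomes `2 T + 6 = 2 e k + e (e - 1)` for the weighted sum `T = ∑ (i - 1) β i`. Two bounds on `T`
leave only two possibilities: `T ≤ (k - 1) e` since `i - 1 ≤ k - 1`, and `2 T ≤ e (e - 1)` because `β` is
a partition of `e` (the weighted sum is largest for `β = (1, …, 1)`). Together they force
`e k ≤ 3` and `e ≤ 2`, so `(e, k) = (1, 3)` or `(2, 1)`.
-/

open Finset

theorem two_mul_sum_Icc_one_sub_one (k : ℕ) : 2 * ∑ i ∈ Icc 1 k, (i - 1) = k * (k - 1) := by
  induction k with
  | zero => rfl
  | succ k ih =>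
    rw [sum_Icc_succ_top (by omega), mul_add, ih]
    cases k <;> simp; ring

theorem two_mul_sum_Icc_sub_one_mul_add_one (k : ℕ) (β : ℕ → ℕ) :
    2 * ∑ i ∈ Icc 1 k, (i - 1) * (β i + 1) = 2 * ∑ i ∈ Icc 1 k, (i - 1) * β i + k * (k - 1) := by
  rw [← two_mul_sum_Icc_one_sub_one, ← mul_add, ← sum_add_distrib]
  simp only [mul_add_one]

theorem sum_Icc_sub_one_mul_le (k : ℕ) (β : ℕ → ℕ) :
    ∑ i ∈ Icc 1 k, (i - 1) * β i ≤ (k - 1) * ∑ i ∈ Icc 1 k, β i := by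
  rw [mul_sum]
  exact sum_le_sum fun i hi => Nat.mul_le_mul_right _ (by grind)

theorem two_mul_sum_Icc_sub_one_mul_add_sum_le_sq {k : ℕ} {β : ℕ → ℕ}
    (hβ : AntitoneOn β (Set.Icc 1 k)) :
    2 * ∑ i ∈ Icc 1 k, (i - 1) * β i + ∑ i ∈ Icc 1 k, β i ≤ (∑ i ∈ Icc 1 k, β i) ^ 2 := by
  induction k with
  | zero => simp
  | succ k ih =>
    have hle : k * β (k + 1) ≤ ∑ i ∈ Icc 1 k, β i := by
      simpa using card_nsmul_le_sum (Icc 1 k) β (β (k + 1)) fun i hi =>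
        have hi := mem_Icc.1 hi
        hβ ⟨hi.1, by omega⟩ ⟨by omega, le_rfl⟩ (by omega)
    have ih := ih (hβ.mono (Set.Icc_subset_Icc_right (by omega)))
    rw [sum_Icc_succ_top (by omega), sum_Icc_succ_top (by omega), add_tsub_cancel_right]
    nlinarith [Nat.mul_le_mul_right (β (k + 1)) hle, Nat.le_mul_self (β (k + 1)),
      Nat.mul_le_mul_left k (Nat.le_mul_self (β (k + 1)))]

theorem eq_of_defect_eq_three {T e k : ℕ} (hk : 1 ≤ k) (hsq : 2 * T + e ≤ e ^ 2)
    (hlin : T ≤ (k - 1) * e) (h : 2 * T + k * (k - 1) + 6 = (e + k) * (e + k - 1)) :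
    (e = 1 ∧ k = 3) ∨ (e = 2 ∧ k = 1) := by
  obtain ⟨m, rfl⟩ : ∃ m, k = m + 1 := ⟨k - 1, by omega⟩
  simp only [add_tsub_cancel_right, ← add_assoc] at hlin h
  have he : 1 ≤ e := by nlinarith
  have hem : e * (m + 1) ≤ 3 := by nlinarith
  have he2 : e ≤ 2 := by nlinarith
  have hm : m ≤ 2 := by nlinarith
  interval_cases e <;> interval_cases m <;> omega

/-- Abelian case of Ellis's theorem (Theorem 1.1(iv)): if
`α₂ + 2α₃ + ... + (k-1)α_k = n(n-1)/2 - 3`, then the partition is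
`(3)` or `(2,1,1)`. -/
theorem stmt15 (n k : ℕ) (α : ℕ → ℕ) (hk : 1 ≤ k)
    (hmono : ∀ i j, 1 ≤ i → i ≤ j → j ≤ k → α j ≤ α i)
    (hpos : ∀ i, 1 ≤ i → i ≤ k → 1 ≤ α i)
    (hsum : ∑ i ∈ Finset.Icc 1 k, α i = n)
    (hM : (∑ i ∈ Finset.Icc 1 k, (i - 1) * α i) + 3 = n * (n - 1) / 2) :
    (k = 1 ∧ n = 3) ∨ (k = 3 ∧ α 1 = 2 ∧ α 2 = 1 ∧ α 3 = 1) := by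
  obtain ⟨β, hαβ, hβ⟩ : ∃ β : ℕ → ℕ, (∀ i ∈ Icc 1 k, α i = β i + 1) ∧ AntitoneOn β (Set.Icc 1 k) :=
    ⟨fun i => α i - 1, fun i hi => (Nat.sub_add_cancel (hpos i (mem_Icc.1 hi).1 (mem_Icc.1 hi).2)).symm,
      fun i hi j hj hij => Nat.sub_le_sub_right (hmono i j hi.1 hij hj.2) 1⟩
  have hn : n = ∑ i ∈ Icc 1 k, β i + k := by
    simp [← hsum, sum_congr rfl hαβ, sum_add_distrib]
  have hweight : 2 * ∑ i ∈ Icc 1 k, (i - 1) * β i + k * (k - 1) + 6 = n * (n - 1) := by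
    have hshift : ∑ i ∈ Icc 1 k, (i - 1) * α i = ∑ i ∈ Icc 1 k, (i - 1) * (β i + 1) :=
      sum_congr rfl fun i hi => by rw [hαβ i hi]
    rw [← Nat.div_two_mul_two_of_even n.even_mul_pred_self, ← hM, hshift]
    linarith [two_mul_sum_Icc_sub_one_mul_add_one k β]
  rcases eq_of_defect_eq_three hk (two_mul_sum_Icc_sub_one_mul_add_sum_le_sq hβ)
    (sum_Icc_sub_one_mul_le k β) (hn ▸ hweight) with ⟨he, rfl⟩ | ⟨he, rfl⟩
  · have h3 : α 1 + α 2 + α 3 = 4 := by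
      simpa [sum_Icc_succ_top, he, add_assoc] using hsum.trans hn
    have := hmono 1 2; have := hmono 2 3; have := hpos 3
    omega
  · omega
end
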